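/- arXiv:2507.22334 — 2 statements merged into one kernel-verified Lean document; each statement's English description precedes it below -/
import Mathlib

section
/- Under the hypotheses of the two-field Schur complement bound, every eigenvalue of Ŝ⁻¹ S̃ with Ŝ = (ε/μ)D lies in the interval [1, 1 + α²d/(c₀μ)]. -/
/-!
At an eigenvector `v`, the eigenvalue is the Rayleigh quotient
`λ = 1 + (αε/μ)² vᵀ B K⁻¹ Bᵀ v / vᵀ Ŝ v` with `K = εA + A₀`, which gives `λ ≥ 1`.
For the upper bound, `(ε/d) A₀ ≤ K` together with Cauchy–Schwarz in the `M⁻¹` inner product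
yields `(ε/d) B K⁻¹ Bᵀ ≤ M ≤ D / c₀`.
-/

open Matrix

namespace Matrix

variable {ι κ : Type*} [Fintype ι] [Fintype κ] [DecidableEq ι]

theorem PosSemidef.dotProduct_mulVec_sq_le {P : Matrix ι ι ℝ} (hP : P.PosSemidef) (x y : ι → ℝ) :
    (x ⬝ᵥ P *ᵥ y) ^ 2 ≤ (x ⬝ᵥ P *ᵥ x) * (y ⬝ᵥ P *ᵥ y) := by
  have hsymm : P.toBilin'.IsSymm := isSymm_toBilin'_iff_isSymm.2 (by simpa using hP.isHermitian)
  simpa only [toBilin'_apply'] using P.toBilin'.apply_sq_le_of_symm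
    (fun x => by simpa [toBilin'_apply'] using hP.dotProduct_mulVec_nonneg x)
    (LinearMap.BilinForm.isSymm_iff.1 hsymm) x y

theorem PosDef.dotProduct_sq_le_inv {M : Matrix ι ι ℝ} (hM : M.PosDef) (z v : ι → ℝ) :
    (z ⬝ᵥ v) ^ 2 ≤ (z ⬝ᵥ M⁻¹ *ᵥ z) * (v ⬝ᵥ M *ᵥ v) := by
  have hMv : M⁻¹ *ᵥ (M *ᵥ v) = v := by
    rw [mulVec_mulVec, nonsing_inv_mul _ (isUnit_iff_isUnit_det _ |>.1 hM.isUnit), one_mulVec]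
  simpa only [hMv, dotProduct_comm (M *ᵥ v)] using hM.inv.posSemidef.dotProduct_mulVec_sq_le z (M *ᵥ v)

theorem dotProduct_mulVec_eq_mul_of_inv_mul_mulVec_eq_smul {S S' : Matrix ι ι ℝ}
    (hS : IsUnit S) {v : ι → ℝ} {lam : ℝ} (h : (S⁻¹ * S') *ᵥ v = lam • v) :
    v ⬝ᵥ S' *ᵥ v = lam * (v ⬝ᵥ S *ᵥ v) := by
  have hS' : S' *ᵥ v = lam • S *ᵥ v := by
    rw [← mulVec_smul, ← h, mulVec_mulVec, ← Matrix.mul_assoc,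
      mul_nonsing_inv _ ((isUnit_iff_isUnit_det _).1 hS), Matrix.one_mul]
  rw [hS', dotProduct_smul, smul_eq_mul]

theorem mul_dotProduct_mul_inv_mul_transpose_le [DecidableEq κ] {K : Matrix κ κ ℝ}
    {M : Matrix ι ι ℝ} {B : Matrix ι κ ℝ} {c : ℝ} (hK : IsUnit K) (hM : M.PosDef) (hc : 0 ≤ c)
    (hKB : ∀ w, c * (w ⬝ᵥ (Bᵀ * M⁻¹ * B) *ᵥ w) ≤ w ⬝ᵥ K *ᵥ w) (v : ι → ℝ) :
    c * (v ⬝ᵥ (B * K⁻¹ * Bᵀ) *ᵥ v) ≤ v ⬝ᵥ M *ᵥ v := by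
  -- `t := vᵀ B K⁻¹ Bᵀ v` equals `(B w)ᵀ v = wᵀ K w`, so Cauchy–Schwarz gives
  -- `c t² ≤ c ((B w)ᵀ M⁻¹ (B w)) (vᵀ M v) ≤ t (vᵀ M v)`.
  set w := K⁻¹ *ᵥ Bᵀ *ᵥ v
  have hKw : K *ᵥ w = Bᵀ *ᵥ v := by
    rw [mulVec_mulVec, mul_nonsing_inv _ ((isUnit_iff_isUnit_det _).1 hK), one_mulVec]
  have ht : v ⬝ᵥ (B * K⁻¹ * Bᵀ) *ᵥ v = B *ᵥ w ⬝ᵥ v := by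
    rw [← mulVec_mulVec, ← mulVec_mulVec, dotProduct_comm]
  have hP : w ⬝ᵥ (Bᵀ * M⁻¹ * B) *ᵥ w = B *ᵥ w ⬝ᵥ M⁻¹ *ᵥ B *ᵥ w := by
    rw [← mulVec_mulVec, ← mulVec_mulVec, dotProduct_mulVec, vecMul_transpose]
  have htK : B *ᵥ w ⬝ᵥ v = w ⬝ᵥ K *ᵥ w := by
    rw [hKw, dotProduct_mulVec, vecMul_transpose, dotProduct_comm]
  have hCS := hM.dotProduct_sq_le_inv (B *ᵥ w) v
  have hPt := hKB w
  rw [ht]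
  rw [hP, ← htK] at hPt
  have hm := hM.posSemidef.dotProduct_mulVec_nonneg v
  have hP0 := hM.inv.posSemidef.dotProduct_mulVec_nonneg (B *ᵥ w)
  simp only [star_trivial] at hm hP0
  nlinarith [mul_le_mul_of_nonneg_left hCS hc, mul_le_mul_of_nonneg_right hPt hm]

theorem PosDef.smul_add_transpose_mul_inv_mul [DecidableEq κ] {A : Matrix κ κ ℝ}
    {M : Matrix ι ι ℝ} (hA : A.PosDef) (hM : M.PosDef) {ε : ℝ} (hε : 0 < ε) (B : Matrix ι κ ℝ) :
    (ε • A + Bᵀ * M⁻¹ * B).PosDef :=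
  (hA.smul hε).add_posSemidef (by simpa using hM.inv.posSemidef.conjTranspose_mul_mul_same B)

theorem div_mul_dotProduct_mul_inv_smul_add_mul_transpose_le [DecidableEq κ] {A : Matrix κ κ ℝ}
    {M : Matrix ι ι ℝ} {B : Matrix ι κ ℝ} {ε d : ℝ} (hA : A.PosDef) (hM : M.PosDef)
    (hε : 0 < ε) (hd : 0 < d)
    (hbound : ∀ u, u ⬝ᵥ (Bᵀ * M⁻¹ * B) *ᵥ u ≤ d * (u ⬝ᵥ A *ᵥ u)) (v : ι → ℝ) :
    ε / d * (v ⬝ᵥ (B * (ε • A + Bᵀ * M⁻¹ * B)⁻¹ * Bᵀ) *ᵥ v) ≤ v ⬝ᵥ M *ᵥ v := by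
  refine mul_dotProduct_mul_inv_mul_transpose_le (hA.smul_add_transpose_mul_inv_mul hM hε B).isUnit
    hM (div_pos hε hd).le (fun w => ?_) v
  have hA₀w := (hM.inv.posSemidef.conjTranspose_mul_mul_same B).dotProduct_mulVec_nonneg w
  have hAw : ε / d * (w ⬝ᵥ (Bᵀ * M⁻¹ * B) *ᵥ w) ≤ ε * (w ⬝ᵥ A *ᵥ w) := by
    rw [div_mul_eq_mul_div, div_le_iff₀ hd, mul_assoc, mul_comm _ d]
    exact mul_le_mul_of_nonneg_left (hbound w) hε.le
  simp only [star_trivial, conjTranspose_eq_transpose_of_trivial] at hA₀w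
  rw [add_mulVec, smul_mulVec, dotProduct_add, dotProduct_smul, smul_eq_mul]
  linarith

end Matrix

theorem two_field_preconditioned_eigenvalue_bounds_general {n N : ℕ}
    (A : Matrix (Fin n) (Fin n) ℝ) (M D : Matrix (Fin N) (Fin N) ℝ)
    (B : Matrix (Fin N) (Fin n) ℝ) (ε μ α c₀ d : ℝ)
    (hA : A.PosDef) (hM : M.PosDef) (hD : D.PosDef)
    (hDM : (D - c₀ • M).PosSemidef)
    (hε : 0 < ε) (hμ : 0 < μ) (hc₀ : 0 < c₀) (hd : 0 < d)
    (hbound : ∀ u : Fin n → ℝ,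
      u ⬝ᵥ (Bᵀ * M⁻¹ * B).mulVec u ≤ d * (u ⬝ᵥ A.mulVec u)) :
    ∀ (lam : ℝ) (v : Fin N → ℝ), v ≠ 0 →
      (((ε / μ) • D)⁻¹ *
        ((ε / μ) • D + ((α * ε / μ) ^ 2) • (B * (ε • A + Bᵀ * M⁻¹ * B)⁻¹ * Bᵀ))).mulVec v
        = lam • v →
      1 ≤ lam ∧ lam ≤ 1 + α ^ 2 * d / (c₀ * μ) := by
  intro lam v hv heig
  have hK := hA.smul_add_transpose_mul_inv_mul hM hε B
  have hT : (B * (ε • A + Bᵀ * M⁻¹ * B)⁻¹ * Bᵀ).PosSemidef := by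
    simpa using hK.inv.posSemidef.mul_mul_conjTranspose_same B
  have hrayleigh := dotProduct_mulVec_eq_mul_of_inv_mul_mulVec_eq_smul
    (hD.smul (div_pos hε hμ)).isUnit heig
  have hschur := div_mul_dotProduct_mul_inv_smul_add_mul_transpose_le hA hM hε hd hbound v
  have hDv := hDM.dotProduct_mulVec_nonneg v
  have hm := hM.dotProduct_mulVec_pos hv
  have ht := hT.dotProduct_mulVec_nonneg v
  simp only [star_trivial, add_mulVec, smul_mulVec, sub_mulVec, dotProduct_add, dotProduct_sub,
    dotProduct_smul, smul_eq_mul] at hrayleigh hDv hm ht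
  generalize v ⬝ᵥ D *ᵥ v = q at hrayleigh hDv
  generalize v ⬝ᵥ M *ᵥ v = m at hschur hDv hm
  generalize v ⬝ᵥ (B * (ε • A + Bᵀ * M⁻¹ * B)⁻¹ * Bᵀ) *ᵥ v = t at hrayleigh hschur ht
  have hq : 0 < ε / μ * q := by
    have : 0 < q := by linarith [mul_pos hc₀ hm]
    positivity
  have hct : (α * ε / μ) ^ 2 * t ≤ α ^ 2 * d / (c₀ * μ) * (ε / μ * q) :=
    calc (α * ε / μ) ^ 2 * t = α ^ 2 * d * ε / μ ^ 2 * (ε / d * t) := by field_simp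
      _ ≤ α ^ 2 * d * ε / μ ^ 2 * (q / c₀) := by
        gcongr
        exact hschur.trans ((le_div_iff₀' hc₀).2 (by linarith))
      _ = α ^ 2 * d / (c₀ * μ) * (ε / μ * q) := by field_simp
  have hct0 : 0 ≤ (α * ε / μ) ^ 2 * t := by positivity
  refine ⟨le_of_mul_le_mul_right ?_ hq, le_of_mul_le_mul_right ?_ hq⟩ <;> linarith

theorem two_field_preconditioned_eigenvalue_bounds {n N : ℕ}
    (A : Matrix (Fin n) (Fin n) ℝ) (M D : Matrix (Fin N) (Fin N) ℝ)
    (B : Matrix (Fin N) (Fin n) ℝ) (ε μ α c₀ d : ℝ)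
    (hA : A.PosDef) (hM : M.PosDef) (hD : D.PosDef)
    (hDM : (D - c₀ • M).PosSemidef)
    (hε : 0 < ε) (hμ : 0 < μ) (hα : 0 < α) (hc₀ : 0 < c₀) (hd : 0 < d)
    (hbound : ∀ u : Fin n → ℝ,
      u ⬝ᵥ (Bᵀ * M⁻¹ * B).mulVec u ≤ d * (u ⬝ᵥ A.mulVec u)) :
    ∀ (lam : ℝ) (v : Fin N → ℝ), v ≠ 0 →
      (((ε / μ) • D)⁻¹ *
        ((ε / μ) • D + ((α * ε / μ) ^ 2) • (B * (ε • A + Bᵀ * M⁻¹ * B)⁻¹ * Bᵀ))).mulVec v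
        = lam • v →
      1 ≤ lam ∧ lam ≤ 1 + α ^ 2 * d / (c₀ * μ) :=
  two_field_preconditioned_eigenvalue_bounds_general A M D B ε μ α c₀ d hA hM hD hDM hε hμ hc₀ hd
    hbound
end

section
/- Let A₁ be SPD, M SPD, and B a matrix satisfying uᵀBᵀM⁻¹Bu ≤ d·uᵀA₁u for all u. Then the operator norm of A₁⁻¹Bᵀ satisfies ‖A₁⁻¹Bᵀ‖² ≤ d·λ_max(M)/λ_min(A₁). -/
/-!
Put `u = A₁⁻¹ Bᵀ z` and `w = B u`, so that `uᵀ A₁ u = wᵀ z`. The eigenvalue bound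
`|w|² ≤ λ_max(M) · wᵀ M⁻¹ w` and the hypothesis give `|w|² ≤ d λ_max(M) · wᵀ z`, which by
Cauchy–Schwarz forces `wᵀ z ≤ d λ_max(M) |z|²`. It remains to use
`λ_min(A₁) |u|² ≤ uᵀ A₁ u`.
-/

open Matrix

namespace Matrix

variable {ι : Type*} [Fintype ι]

theorem dotProduct_sq_le_dotProduct_self_mul (w z : ι → ℝ) :
    (w ⬝ᵥ z) ^ 2 ≤ (w ⬝ᵥ w) * (z ⬝ᵥ z) := by
  simpa only [dotProduct, sq] using Finset.sum_mul_sq_le_sq_mul_sq Finset.univ w z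

theorem dotProduct_le_of_dotProduct_self_le {w z : ι → ℝ} {c : ℝ} (hc : 0 ≤ c)
    (h : w ⬝ᵥ w ≤ c * (w ⬝ᵥ z)) : w ⬝ᵥ z ≤ c * (z ⬝ᵥ z) := by
  have hzz : 0 ≤ z ⬝ᵥ z := by simpa using dotProduct_star_self_nonneg z
  rcases le_or_gt (w ⬝ᵥ z) 0 with hwz | hwz
  · exact hwz.trans (mul_nonneg hc hzz)
  · refine le_of_mul_le_mul_right ?_ hwz
    calc w ⬝ᵥ z * (w ⬝ᵥ z) ≤ (w ⬝ᵥ w) * (z ⬝ᵥ z) := by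
          simpa only [sq] using dotProduct_sq_le_dotProduct_self_mul w z
      _ ≤ c * (w ⬝ᵥ z) * (z ⬝ᵥ z) := mul_le_mul_of_nonneg_right h hzz
      _ = c * (z ⬝ᵥ z) * (w ⬝ᵥ z) := by ring

theorem dotProduct_transpose_mul_mul_mulVec {m : Type*} [Fintype m] {R : Type*} [CommSemiring R]
    (B : Matrix m ι R) (C : Matrix m m R) (u : ι → R) :
    u ⬝ᵥ (Bᵀ * C * B) *ᵥ u = (B *ᵥ u) ⬝ᵥ C *ᵥ (B *ᵥ u) := by
  rw [← mulVec_mulVec, ← mulVec_mulVec, dotProduct_mulVec, vecMul_transpose]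

variable [DecidableEq ι]

theorem dotProduct_mulVec_mul_diagonal_mul_star (U : Matrix ι ι ℝ) (g x : ι → ℝ) :
    x ⬝ᵥ (U * diagonal g * star U) *ᵥ x = ∑ i, g i * (star U *ᵥ x) i ^ 2 := by
  rw [← mulVec_mulVec, ← mulVec_mulVec, dotProduct_mulVec, star_eq_conjTranspose,
    conjTranspose_eq_transpose_of_trivial, ← mulVec_transpose]
  simp only [dotProduct, mulVec_diagonal]
  exact Finset.sum_congr rfl fun i _ => by ring

theorem dotProduct_self_eq_sum_star_mulVec_sq {U : Matrix ι ι ℝ} (hU : U ∈ unitaryGroup ι ℝ)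
    (x : ι → ℝ) : x ⬝ᵥ x = ∑ i, (star U *ᵥ x) i ^ 2 := by
  have := dotProduct_mulVec_mul_diagonal_mul_star U 1 x
  simpa [mem_unitaryGroup_iff.mp hU] using this

theorem IsHermitian.eq_mul_diagonal_eigenvalues_mul_star {A : Matrix ι ι ℝ} (hA : A.IsHermitian) :
    A = (hA.eigenvectorUnitary : Matrix ι ι ℝ) * diagonal hA.eigenvalues *
      star (hA.eigenvectorUnitary : Matrix ι ι ℝ) := by
  conv_lhs => rw [hA.spectral_theorem]
  simp

theorem inv_mul_diagonal_mul_star {U : Matrix ι ι ℝ} (hU : U ∈ unitaryGroup ι ℝ) {g : ι → ℝ}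
    (hg : ∀ i, g i ≠ 0) : (U * diagonal g * star U)⁻¹ = U * diagonal g⁻¹ * star U := by
  have hdiag : diagonal g * diagonal g⁻¹ = 1 := by
    rw [diagonal_mul_diagonal, ← diagonal_one]
    exact congrArg diagonal (funext fun i => mul_inv_cancel₀ (hg i))
  refine inv_eq_right_inv ?_
  calc U * diagonal g * star U * (U * diagonal g⁻¹ * star U)
      = U * (diagonal g * (star U * U) * diagonal g⁻¹) * star U := by simp only [Matrix.mul_assoc]
    _ = 1 := by
      rw [mem_unitaryGroup_iff'.mp hU, Matrix.mul_one, hdiag, Matrix.mul_one,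
        mem_unitaryGroup_iff.mp hU]

theorem PosDef.inv_eq_mul_diagonal_inv_eigenvalues_mul_star {A : Matrix ι ι ℝ} (hA : A.PosDef) :
    A⁻¹ = (hA.1.eigenvectorUnitary : Matrix ι ι ℝ) * diagonal hA.1.eigenvalues⁻¹ *
      star (hA.1.eigenvectorUnitary : Matrix ι ι ℝ) := by
  conv_lhs => rw [hA.1.eq_mul_diagonal_eigenvalues_mul_star]
  exact inv_mul_diagonal_mul_star hA.1.eigenvectorUnitary.2 fun i => (hA.eigenvalues_pos i).ne'

theorem IsHermitian.iInf_eigenvalues_mul_dotProduct_self_le {A : Matrix ι ι ℝ}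
    (hA : A.IsHermitian) (x : ι → ℝ) :
    (⨅ i, hA.eigenvalues i) * (x ⬝ᵥ x) ≤ x ⬝ᵥ A *ᵥ x := by
  conv_rhs => rw [hA.eq_mul_diagonal_eigenvalues_mul_star]
  rw [dotProduct_mulVec_mul_diagonal_mul_star, dotProduct_self_eq_sum_star_mulVec_sq
    hA.eigenvectorUnitary.2, Finset.mul_sum]
  exact Finset.sum_le_sum fun i _ => mul_le_mul_of_nonneg_right
    (ciInf_le (Set.finite_range _).bddBelow i) (sq_nonneg _)

theorem PosDef.dotProduct_self_le_iSup_eigenvalues_mul_inv {A : Matrix ι ι ℝ}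
    (hA : A.PosDef) (x : ι → ℝ) :
    x ⬝ᵥ x ≤ (⨆ i, hA.1.eigenvalues i) * (x ⬝ᵥ A⁻¹ *ᵥ x) := by
  set U : Matrix ι ι ℝ := ↑hA.1.eigenvectorUnitary
  rw [hA.inv_eq_mul_diagonal_inv_eigenvalues_mul_star, dotProduct_mulVec_mul_diagonal_mul_star,
    dotProduct_self_eq_sum_star_mulVec_sq hA.1.eigenvectorUnitary.2, Finset.mul_sum]
  refine Finset.sum_le_sum fun i _ => ?_
  have hev := hA.eigenvalues_pos i
  calc (star U *ᵥ x) i ^ 2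
        = hA.1.eigenvalues i * (hA.1.eigenvalues⁻¹ i * (star U *ᵥ x) i ^ 2) := by
        rw [Pi.inv_apply, ← mul_assoc, mul_inv_cancel₀ hev.ne', one_mul]
    _ ≤ _ := mul_le_mul_of_nonneg_right (le_ciSup (Set.finite_range _).bddAbove i)
        (mul_nonneg (inv_nonneg.mpr hev.le) (sq_nonneg _))

theorem PosDef.iInf_eigenvalues_pos [Nonempty ι] {A : Matrix ι ι ℝ} (hA : A.PosDef) :
    0 < ⨅ i, hA.1.eigenvalues i := by
  obtain ⟨i, hi⟩ := Finite.exists_min hA.1.eigenvalues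
  exact (hA.eigenvalues_pos i).trans_le (le_ciInf hi)

end Matrix

theorem opnorm_sq_bound_AinvBt_general {n N : ℕ} (hn : 0 < n)
    (A₁ : Matrix (Fin n) (Fin n) ℝ) (M : Matrix (Fin N) (Fin N) ℝ)
    (B : Matrix (Fin N) (Fin n) ℝ) (d : ℝ)
    (hA₁ : A₁.PosDef) (hM : M.PosDef) (hd : 0 < d)
    (hbound : ∀ u : Fin n → ℝ,
      u ⬝ᵥ (Bᵀ * M⁻¹ * B).mulVec u ≤ d * (u ⬝ᵥ A₁.mulVec u)) :
    ∀ z : Fin N → ℝ,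
      ((A₁⁻¹ * Bᵀ).mulVec z) ⬝ᵥ ((A₁⁻¹ * Bᵀ).mulVec z) ≤
        (d * (⨆ i, hM.1.eigenvalues i) / (⨅ i, hA₁.1.eigenvalues i)) * (z ⬝ᵥ z) := by
  have : Nonempty (Fin n) := ⟨⟨0, hn⟩⟩
  intro z
  set u := (A₁⁻¹ * Bᵀ) *ᵥ z
  set w := B *ᵥ u
  set lmax := ⨆ i, hM.1.eigenvalues i
  have hlmax : 0 ≤ lmax := Real.iSup_nonneg fun i => (hM.eigenvalues_pos i).le
  have hu : A₁ *ᵥ u = Bᵀ *ᵥ z := by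
    rw [mulVec_mulVec, ← Matrix.mul_assoc, mul_nonsing_inv _ hA₁.det_pos.ne'.isUnit,
      Matrix.one_mul]
  have henergy : u ⬝ᵥ A₁ *ᵥ u = w ⬝ᵥ z := by
    rw [hu, dotProduct_mulVec, vecMul_transpose]
  have hww : w ⬝ᵥ w ≤ d * lmax * (w ⬝ᵥ z) := calc
    w ⬝ᵥ w ≤ lmax * (w ⬝ᵥ M⁻¹ *ᵥ w) := hM.dotProduct_self_le_iSup_eigenvalues_mul_inv w
    _ ≤ lmax * (d * (w ⬝ᵥ z)) := by
      rw [← henergy, ← dotProduct_transpose_mul_mul_mulVec]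
      exact mul_le_mul_of_nonneg_left (hbound u) hlmax
    _ = d * lmax * (w ⬝ᵥ z) := by ring
  have hwz : w ⬝ᵥ z ≤ d * lmax * (z ⬝ᵥ z) :=
    dotProduct_le_of_dotProduct_self_le (by positivity) hww
  rw [div_mul_eq_mul_div, le_div_iff₀ hA₁.iInf_eigenvalues_pos, mul_comm]
  exact (hA₁.1.iInf_eigenvalues_mul_dotProduct_self_le u).trans (henergy.trans_le hwz)

theorem opnorm_sq_bound_AinvBt {n N : ℕ} (hn : 0 < n) (hN : 0 < N)
    (A₁ : Matrix (Fin n) (Fin n) ℝ) (M : Matrix (Fin N) (Fin N) ℝ)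
    (B : Matrix (Fin N) (Fin n) ℝ) (d : ℝ)
    (hA₁ : A₁.PosDef) (hM : M.PosDef) (hd : 0 < d)
    (hbound : ∀ u : Fin n → ℝ,
      u ⬝ᵥ (Bᵀ * M⁻¹ * B).mulVec u ≤ d * (u ⬝ᵥ A₁.mulVec u)) :
    ∀ z : Fin N → ℝ,
      ((A₁⁻¹ * Bᵀ).mulVec z) ⬝ᵥ ((A₁⁻¹ * Bᵀ).mulVec z) ≤
        (d * (⨆ i, hM.1.eigenvalues i) / (⨅ i, hA₁.1.eigenvalues i)) * (z ⬝ᵥ z) :=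
  opnorm_sq_bound_AinvBt_general hn A₁ M B d hA₁ hM hd hbound
end
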